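/- In a uniquely geodesic metric space satisfying the segment-gluing axiom, if P is the nearest-point projection onto a segment [x,y] and z is a point with projection P(z), then for any point u with d(u,z) < d(z, P(z)) lying on an arc disjoint from [x,y] except at endpoints, P(u) = P(z); consequently any arc joining x and y must coincide with [x,y]. -/

import Mathlib

open Set

/-- A geodesic segment from `x` to `y`: the image of an isometric embedding of a
real interval `[a,b]` sending `a` to `x` and `b` to `y`. -/
def IsGeodesicSegment {X : Type*} [MetricSpace X] (s : Set X) (x y : X) : Prop :=
  ∃ a b : ℝ, a ≤ b ∧ ∃ f : ℝ → X,
    (∀ u ∈ Icc a b, ∀ v ∈ Icc a b, dist (f u) (f v) = |u - v|) ∧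
    f a = x ∧ f b = y ∧ s = f '' Icc a b

/-- An arc joining `x` and `y`: a homeomorphic image of a closed real interval
with endpoints `x` and `y`. -/
def IsArc {X : Type*} [MetricSpace X] (A : Set X) (x y : X) : Prop :=
  ∃ a b : ℝ, a ≤ b ∧ ∃ f : ℝ → X,
    ContinuousOn f (Icc a b) ∧ InjOn f (Icc a b) ∧
    f a = x ∧ f b = y ∧ A = f '' Icc a b

open Filter Topology

/-!
A segment `[u, z]` shorter than `d(z, P z)` misses `[x, y]`, and the gluing axiom gives
`[u, P z] ⊆ [u, z] ∪ [z, P z]`, so `[u, P z]` meets `[x, y]` only at `P z`. Gluing `[u, P z]` to the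
subsegment `[P z, P u]` of `[x, y]` yields `d(u, P z) + d(P z, P u) = d(u, P u) ≤ d(u, P z)`, hence
`P u = P z`.

So `P` is a continuous retraction onto `[x, y]` that is locally constant off `[x, y]`. An arc
leaving `[x, y]` would do so along a parameter interval `(c, d)` with both ends mapped into
`[x, y]`; `P` is constant along it, so the arc takes the same value at `c` and `d`, contradicting
injectivity. Hence an arc from `x` to `y` lies in `[x, y]`, and being connected it fills it.
-/

def UniquelyGeodesic (X : Type*) [MetricSpace X] : Prop :=
  ∀ x y : X, ∃! s : Set X, IsGeodesicSegment s x y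

def SegmentGluing (X : Type*) [MetricSpace X] : Prop :=
  ∀ (x y z : X) (s t : Set X), IsGeodesicSegment s y x →
    IsGeodesicSegment t x z → s ∩ t = {x} → IsGeodesicSegment (s ∪ t) y z

theorem exists_Ioo_gap_of_isClosed {K : Set ℝ} (hK : IsClosed K) {a b t : ℝ} (ha : a ∈ K)
    (hb : b ∈ K) (hat : a ≤ t) (htb : t ≤ b) (ht : t ∉ K) :
    ∃ c ∈ K, ∃ d ∈ K, c < t ∧ t < d ∧ ∀ r ∈ Ioo c d, r ∉ K := by
  have hbdd : BddAbove (K ∩ Iic t) := ⟨t, fun _ h => h.2⟩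
  have hbdd' : BddBelow (K ∩ Ici t) := ⟨t, fun _ h => h.2⟩
  have hc : sSup (K ∩ Iic t) ∈ K ∩ Iic t := (hK.inter isClosed_Iic).csSup_mem ⟨a, ha, hat⟩ hbdd
  have hd : sInf (K ∩ Ici t) ∈ K ∩ Ici t := (hK.inter isClosed_Ici).csInf_mem ⟨b, hb, htb⟩ hbdd'
  refine ⟨_, hc.1, _, hd.1, lt_of_le_of_ne hc.2 fun h => ht (h ▸ hc.1),
    lt_of_le_of_ne hd.2 fun h => ht (h ▸ hd.1), fun r hr hrK => ?_⟩
  rcases le_total r t with hrt | htr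
  · exact hr.1.not_ge (le_csSup hbdd ⟨hrK, hrt⟩)
  · exact hr.2.not_ge (csInf_le hbdd' ⟨hrK, htr⟩)

theorem eq_of_continuousOn_Icc_of_eventually_eq {Y : Type*} [TopologicalSpace Y] [T2Space Y]
    {h : ℝ → Y} {c d : ℝ} (hcd : c < d) (hh : ContinuousOn h (Icc c d))
    (hloc : ∀ r ∈ Ioo c d, ∀ᶠ r' in 𝓝 r, h r' = h r) : h c = h d := by
  obtain ⟨m, hm⟩ : (Ioo c d).Nonempty := nonempty_Ioo.2 hcd
  have hconst : EqOn h (fun _ => h m) (Ioo c d) := fun r hr =>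
    eq_of_germ_isConstant_on (fun r hr => ⟨h r, hloc r hr⟩) isPreconnected_Ioo hr hm
  have hconst' := hconst.of_subset_closure hh continuousOn_const Ioo_subset_Icc_self
    (closure_Ioo hcd.ne).ge
  exact (hconst' (left_mem_Icc.2 hcd.le)).trans (hconst' (right_mem_Icc.2 hcd.le)).symm

theorem mapsTo_of_injOn_of_retraction {X : Type*} [TopologicalSpace X] [T2Space X] {s : Set X}
    (hs : IsClosed s) {g : X → X} (hg : Continuous g) (hgs : ∀ m ∈ s, g m = m)
    (hloc : ∀ m ∉ s, ∀ᶠ m' in 𝓝 m, g m' = g m) {f : ℝ → X} {a b : ℝ}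
    (hf : ContinuousOn f (Icc a b)) (hfi : InjOn f (Icc a b)) (ha : f a ∈ s) (hb : f b ∈ s) :
    MapsTo f (Icc a b) s := by
  intro t ht
  by_contra hts
  have hK : IsClosed (Icc a b ∩ f ⁻¹' s) := hf.preimage_isClosed_of_isClosed isClosed_Icc hs
  obtain ⟨c, hc, d, hd, hct, htd, hgap⟩ := exists_Ioo_gap_of_isClosed hK
    ⟨left_mem_Icc.2 (ht.1.trans ht.2), ha⟩ ⟨right_mem_Icc.2 (ht.1.trans ht.2), hb⟩ ht.1 ht.2
    fun h => hts h.2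
  have hcd : Icc c d ⊆ Icc a b := Icc_subset_Icc hc.1.1 hd.1.2
  have hgf : g (f c) = g (f d) :=
    eq_of_continuousOn_Icc_of_eventually_eq (hct.trans htd) (hg.comp_continuousOn (hf.mono hcd))
      fun r hr => by
        have hfr : f r ∉ s := fun h => hgap r hr ⟨hcd (Ioo_subset_Icc_self hr), h⟩
        have hr' : Icc a b ∈ 𝓝 r := Icc_mem_nhds (hc.1.1.trans_lt hr.1) (hr.2.trans_le hd.1.2)
        exact (hf.continuousAt hr').eventually (hloc _ hfr)
  rw [hgs _ hc.2, hgs _ hd.2] at hgf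
  exact (hct.trans htd).ne (hfi hc.1 hd.1 hgf)

section Geodesic

variable {X : Type*} [MetricSpace X] {S T R : Set X} {x y z u p q w : X}

theorem continuousOn_of_dist_eq_abs_sub {I : Set ℝ} {f : ℝ → X}
    (hiso : ∀ u ∈ I, ∀ v ∈ I, dist (f u) (f v) = |u - v|) : ContinuousOn f I :=
  (LipschitzOnWith.of_dist_le_mul (K := 1) fun u hu v hv => by
    rw [hiso u hu v hv, NNReal.coe_one, one_mul, Real.dist_eq]).continuousOn

theorem isGeodesicSegment_image_Icc {a b : ℝ} {f : ℝ → X}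
    (hiso : ∀ u ∈ Icc a b, ∀ v ∈ Icc a b, dist (f u) (f v) = |u - v|)
    {t₁ t₂ : ℝ} (h₁ : t₁ ∈ Icc a b) (h₂ : t₂ ∈ Icc a b) (h₁₂ : t₁ ≤ t₂) :
    IsGeodesicSegment (f '' Icc t₁ t₂) (f t₁) (f t₂) :=
  ⟨t₁, t₂, h₁₂, f, fun u hu v hv =>
    hiso u (Icc_subset_Icc h₁.1 h₂.2 hu) v (Icc_subset_Icc h₁.1 h₂.2 hv), rfl, rfl, rfl⟩

namespace IsGeodesicSegment

theorem left_mem (h : IsGeodesicSegment S x y) : x ∈ S := by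
  obtain ⟨a, b, hab, f, -, rfl, -, rfl⟩ := h
  exact ⟨a, left_mem_Icc.2 hab, rfl⟩

theorem right_mem (h : IsGeodesicSegment S x y) : y ∈ S := by
  obtain ⟨a, b, hab, f, -, -, rfl, rfl⟩ := h
  exact ⟨b, right_mem_Icc.2 hab, rfl⟩

theorem isCompact (h : IsGeodesicSegment S x y) : IsCompact S := by
  obtain ⟨a, b, -, f, hiso, -, -, rfl⟩ := h
  exact isCompact_Icc.image_of_continuousOn (continuousOn_of_dist_eq_abs_sub hiso)

theorem symm (h : IsGeodesicSegment S x y) : IsGeodesicSegment S y x := by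
  obtain ⟨a, b, hab, f, hiso, rfl, rfl, rfl⟩ := h
  have hmem : ∀ t ∈ Icc a b, a + b - t ∈ Icc a b := fun t ht =>
    ⟨by linarith [ht.2], by linarith [ht.1]⟩
  refine ⟨a, b, hab, fun t => f (a + b - t), fun u hu v hv => ?_, by simp, by simp, ?_⟩
  · rw [hiso _ (hmem u hu) _ (hmem v hv), abs_sub_comm]
    ring_nf
  · rw [← image_image f (a + b - ·), image_const_sub_Icc]
    ring_nf

theorem dist_add_dist (h : IsGeodesicSegment S x y) (hw : w ∈ S) :
    dist x w + dist w y = dist x y := by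
  obtain ⟨a, b, hab, f, hiso, rfl, rfl, rfl⟩ := h
  obtain ⟨t, ht, rfl⟩ := hw
  rw [hiso a (left_mem_Icc.2 hab) t ht, hiso t ht b (right_mem_Icc.2 hab),
    hiso a (left_mem_Icc.2 hab) b (right_mem_Icc.2 hab), abs_of_nonpos (by linarith [ht.1]),
    abs_of_nonpos (by linarith [ht.2]), abs_of_nonpos (by linarith)]
  ring

theorem eq_of_dist_left_eq (h : IsGeodesicSegment S x y) (hp : p ∈ S) (hq : q ∈ S)
    (hpq : dist x p = dist x q) : p = q := by
  obtain ⟨a, b, hab, f, hiso, rfl, rfl, rfl⟩ := h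
  obtain ⟨t, ht, rfl⟩ := hp
  obtain ⟨t', ht', rfl⟩ := hq
  rw [hiso a (left_mem_Icc.2 hab) t ht, hiso a (left_mem_Icc.2 hab) t' ht',
    abs_of_nonpos (by linarith [ht.1]), abs_of_nonpos (by linarith [ht'.1])] at hpq
  rw [show t = t' by linarith]

theorem subset_of_isPreconnected (h : IsGeodesicSegment S x y) {A : Set X}
    (hA : IsPreconnected A) (hAS : A ⊆ S) (hx : x ∈ A) (hy : y ∈ A) : S ⊆ A := by
  intro q hq
  have hq' : dist x q ∈ Icc (dist x x) (dist x y) :=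
    ⟨by simp, by linarith [h.dist_add_dist hq, dist_nonneg (x := q) (y := y)]⟩
  obtain ⟨m, hm, hmq⟩ :=
    hA.intermediate_value hx hy (continuous_const.dist continuous_id).continuousOn hq'
  rwa [← h.eq_of_dist_left_eq (hAS hm) hq hmq]

theorem eq_of_mem_of_forall_dist_le (h : IsGeodesicSegment R z q) {s : Set X}
    (hq : ∀ q' ∈ s, dist z q ≤ dist z q') (hw : w ∈ R) (hws : w ∈ s) : w = q :=
  dist_le_zero.1 (by linarith [h.dist_add_dist hw, hq w hws])

end IsGeodesicSegment

theorem UniquelyGeodesic.eq (hX : UniquelyGeodesic X) (hS : IsGeodesicSegment S x y)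
    (hT : IsGeodesicSegment T x y) : S = T :=
  (hX x y).unique hS hT

theorem IsGeodesicSegment.subset_of_mem (hX : UniquelyGeodesic X) (hS : IsGeodesicSegment S x y)
    (hp : p ∈ S) (hq : q ∈ S) (hT : IsGeodesicSegment T p q) : T ⊆ S := by
  obtain ⟨a, b, -, f, hiso, rfl, rfl, rfl⟩ := hS
  obtain ⟨t₁, ht₁, rfl⟩ := hp
  obtain ⟨t₂, ht₂, rfl⟩ := hq
  rcases le_total t₁ t₂ with h | h
  · rw [hX.eq hT (isGeodesicSegment_image_Icc hiso ht₁ ht₂ h)]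
    exact image_mono (Icc_subset_Icc ht₁.1 ht₂.2)
  · rw [hX.eq hT.symm (isGeodesicSegment_image_Icc hiso ht₂ ht₁ h)]
    exact image_mono (Icc_subset_Icc ht₂.1 ht₁.2)

variable (hX : UniquelyGeodesic X) (hglue : SegmentGluing X)
include hX hglue

/-- The tripod property: `[u, p]` branches off `[z, p]` at the last point of `[z, p]` lying
on `[u, z]`. -/
theorem IsGeodesicSegment.subset_union (hR : IsGeodesicSegment R u p)
    (hS : IsGeodesicSegment S u z) (hT : IsGeodesicSegment T z p) : R ⊆ S ∪ T := by
  obtain ⟨a, b, hab, f, hiso, rfl, rfl, rfl⟩ := hT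
  have hK : IsClosed (Icc a b ∩ f ⁻¹' S) :=
    (continuousOn_of_dist_eq_abs_sub hiso).preimage_isClosed_of_isClosed isClosed_Icc
      hS.isCompact.isClosed
  have hbdd : BddAbove (Icc a b ∩ f ⁻¹' S) := ⟨b, fun _ h => h.1.2⟩
  have hτ := hK.csSup_mem ⟨a, left_mem_Icc.2 hab, hS.right_mem⟩ hbdd
  set τ := sSup (Icc a b ∩ f ⁻¹' S)
  obtain ⟨U, hU, -⟩ := hX u (f τ)
  have hUS : U ⊆ S := hS.subset_of_mem hX hS.left_mem hτ.2 hU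
  have hV := isGeodesicSegment_image_Icc hiso hτ.1 (right_mem_Icc.2 hab) hτ.1.2
  have hUV : U ∩ f '' Icc τ b = {f τ} := by
    refine Subset.antisymm ?_ (singleton_subset_iff.2 ⟨hU.right_mem, hV.left_mem⟩)
    rintro _ ⟨hvU, r, hr, rfl⟩
    rw [le_antisymm (le_csSup hbdd ⟨⟨hτ.1.1.trans hr.1, hr.2⟩, hUS hvU⟩) hr.1]
    rfl
  rw [hX.eq hR (hglue _ _ _ _ _ hU hV hUV)]
  exact union_subset_union hUS (image_mono (Icc_subset_Icc hτ.1.1 le_rfl))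

theorem IsGeodesicSegment.eq_of_inter_subset_singleton {s : Set X}
    (hs : IsGeodesicSegment s x y) (hR : IsGeodesicSegment R z p) (hRs : R ∩ s ⊆ {p})
    (hp : p ∈ s) (hq : q ∈ s) (hnear : ∀ q' ∈ s, dist z q ≤ dist z q') : p = q := by
  obtain ⟨V, hV, -⟩ := hX p q
  have hVs : V ⊆ s := hs.subset_of_mem hX hp hq hV
  have hRV : R ∩ V = {p} :=
    Subset.antisymm (fun v hv => hRs ⟨hv.1, hVs hv.2⟩)
      (singleton_subset_iff.2 ⟨hR.right_mem, hV.left_mem⟩)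
  exact (hglue p z q R V hR hV hRV).eq_of_mem_of_forall_dist_le hnear (Or.inl hR.right_mem) hp

theorem IsGeodesicSegment.proj_eq_of_dist_lt {s : Set X} (hs : IsGeodesicSegment s x y)
    {P : X → X} (hPmem : ∀ m : X, P m ∈ s) (hPnear : ∀ m : X, ∀ q ∈ s, dist m (P m) ≤ dist m q)
    (h : dist u z < dist z (P z)) : P u = P z := by
  obtain ⟨S, hS, -⟩ := hX u z
  obtain ⟨T, hT, -⟩ := hX z (P z)
  obtain ⟨R, hR, -⟩ := hX u (P z)
  have hSs : ∀ v ∈ S, v ∉ s := fun v hv hvs => by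
    linarith [hS.dist_add_dist hv, hPnear z v hvs, dist_comm z v, dist_nonneg (x := u) (y := v)]
  have hRs : R ∩ s ⊆ {P z} := by
    rintro v ⟨hvR, hvs⟩
    rcases hR.subset_union hX hglue hS hT hvR with hvS | hvT
    · exact absurd hvs (hSs v hvS)
    · exact hT.eq_of_mem_of_forall_dist_le (hPnear z) hvT hvs
  exact (hs.eq_of_inter_subset_singleton hX hglue hR hRs (hPmem z) (hPmem u) (hPnear u)).symm

end Geodesic

theorem projection_locally_constant_and_arc_unique {X : Type*} [MetricSpace X]
    (hunique : ∀ x y : X, ∃! s : Set X, IsGeodesicSegment s x y)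
    (hglue : ∀ (x y z : X) (s t : Set X), IsGeodesicSegment s y x →
      IsGeodesicSegment t x z → s ∩ t = {x} → IsGeodesicSegment (s ∪ t) y z)
    (x y : X) (s : Set X) (hs : IsGeodesicSegment s x y)
    (P : X → X) (hPmem : ∀ m : X, P m ∈ s)
    (hPnear : ∀ m : X, ∀ q ∈ s, dist m (P m) ≤ dist m q)
    (hPnonexp : ∀ m m' : X, dist (P m) (P m') ≤ dist m m') :
    (∀ A : Set X, IsArc A x y → A ∩ s = {x, y} →
      ∀ z ∈ A, ∀ u ∈ A, dist u z < dist z (P z) → P u = P z) ∧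
    (∀ A : Set X, IsArc A x y → A = s) := by
  have hlocal : ∀ z u : X, dist u z < dist z (P z) → P u = P z := fun z u h =>
    hs.proj_eq_of_dist_lt hunique hglue hPmem hPnear h
  refine ⟨fun A _ _ z _ u _ => hlocal z u, ?_⟩
  have hPcont : Continuous P :=
    (LipschitzWith.of_dist_le_mul (K := 1) fun m m' => by simpa using hPnonexp m m').continuous
  have hPfix : ∀ m ∈ s, P m = m := fun m hm =>
    (dist_le_zero.1 (by simpa using hPnear m m hm)).symm
  have hPloc : ∀ m ∉ s, ∀ᶠ m' in 𝓝 m, P m' = P m := fun m hm => by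
    have hpos : 0 < dist m (P m) := dist_pos.2 fun h => hm (h ▸ hPmem m)
    filter_upwards [Metric.ball_mem_nhds m hpos] with m' hm'
    exact hlocal m m' hm'
  rintro A ⟨a, b, hab, f, hf, hfi, rfl, rfl, rfl⟩
  have hAs : f '' Icc a b ⊆ s := (mapsTo_of_injOn_of_retraction hs.isCompact.isClosed hPcont hPfix
    hPloc hf hfi hs.left_mem hs.right_mem).image_subset
  exact hAs.antisymm (hs.subset_of_isPreconnected (isPreconnected_Icc.image f hf) hAs
    ⟨a, left_mem_Icc.2 hab, rfl⟩ ⟨b, right_mem_Icc.2 hab, rfl⟩)
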